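/- Let p ≥ 5 be a prime with p ≡ 2 (mod 3). Let θ ∈ ℚ_p and q ∈ ℕ satisfy |θ−1|_p < |(q:ℚ_p)|_p < 1 and (θ−1)(1−θ−q) ≠ 0. Let y⁽¹⁾ be the unique root in ℚ_p of the cubic y³ − (1+θ+θ²)y² − (2θ+1)(1−θ−q)y − (1−θ−q)² = 0 and set x⁽¹⁾ = 1 − q + (θ−1)(y⁽¹⁾ − 1) and x⁽∞⁾ = 2−θ−q. Then |x⁽¹⁾ − 1|_p = |q|_p and |x⁽¹⁾ − x⁽∞⁾|_p = |θ−1|_p. -/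

import Mathlib

/-!
Put `c = 1 - θ - q`. Then `‖c‖ = ‖q‖ < 1` and `θ ≡ 1 (mod p)`, so modulo `p` the cubic reduces to
`y ^ 2 * (y - 3)`, of which `3` is a simple root since `p ≠ 3`. Hensel's lemma lifts it to a root
of norm `1`, which by uniqueness is `y⁽¹⁾`. Finally `x⁽¹⁾ - x⁽∞⁾ = (θ - 1) y⁽¹⁾`, and
`x⁽¹⁾ - 1 = -q + (θ - 1)(y⁽¹⁾ - 1)` with `‖(θ - 1)(y⁽¹⁾ - 1)‖ ≤ ‖θ - 1‖ < ‖q‖`.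
-/

open Polynomial IsUltrametricDist

noncomputable def pottsCubic {R : Type*} [CommRing R] (θ c : R) : R[X] :=
  X ^ 3 - C (1 + θ + θ ^ 2) * X ^ 2 - C ((2 * θ + 1) * c) * X - C (c ^ 2)

theorem norm_add_eq_left_of_norm_lt {S : Type*} [SeminormedAddGroup S] [IsUltrametricDist S]
    {x y : S} (h : ‖y‖ < ‖x‖) : ‖x + y‖ = ‖x‖ := by
  rw [norm_add_eq_max_of_norm_ne_norm h.ne', max_eq_left h.le]

section pottsCubic

variable {R S : Type*} [CommRing R] [CommRing S]

@[simp]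
theorem eval_pottsCubic (θ c y : R) :
    (pottsCubic θ c).eval y = y ^ 3 - (1 + θ + θ ^ 2) * y ^ 2 - (2 * θ + 1) * c * y - c ^ 2 := by
  simp [pottsCubic]

theorem eval_derivative_pottsCubic (θ c y : R) :
    (pottsCubic θ c).derivative.eval y = 3 * y ^ 2 - 2 * (1 + θ + θ ^ 2) * y - (2 * θ + 1) * c := by
  simp [pottsCubic, derivative_pow]; ring

@[simp]
theorem map_pottsCubic (f : R →+* S) (θ c : R) :
    (pottsCubic θ c).map f = pottsCubic (f θ) (f c) := by
  simp [pottsCubic, map_ofNat]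

end pottsCubic

theorem ZMod.ofNat_three_ne_zero {p : ℕ} [Fact p.Prime] (hp : p ≠ 3) : (3 : ZMod p) ≠ 0 := by
  intro h
  have h3 : p ∣ 3 := (ZMod.natCast_eq_zero_iff 3 p).1 (by exact_mod_cast h)
  exact hp ((Nat.prime_dvd_prime_iff_eq Fact.out Nat.prime_three).1 h3)

namespace PadicInt

variable {p : ℕ} [Fact p.Prime]

theorem toZMod_eq_zero_iff {x : ℤ_[p]} : toZMod x = 0 ↔ ‖x‖ < 1 := by
  rw [← RingHom.mem_ker, ker_toZMod, IsLocalRing.mem_maximalIdeal, mem_nonunits]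

theorem norm_eq_one_iff_toZMod_ne_zero {x : ℤ_[p]} : ‖x‖ = 1 ↔ toZMod x ≠ 0 := by
  rw [Ne, toZMod_eq_zero_iff, not_lt]
  exact ⟨ge_of_eq, (norm_le_one x).antisymm⟩

theorem exists_isRoot_toZMod_eq {F : ℤ_[p][X]} {a : ℤ_[p]}
    (h : (F.map toZMod).IsRoot (toZMod a)) (h' : (F.map toZMod).derivative.eval (toZMod a) ≠ 0) :
    ∃ z, F.IsRoot z ∧ toZMod z = toZMod a := by
  rw [IsRoot.def, eval_map, eval₂_hom, toZMod_eq_zero_iff] at h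
  rw [derivative_map, eval_map, eval₂_hom, ← norm_eq_one_iff_toZMod_ne_zero] at h'
  obtain ⟨z, hz, hza, -⟩ := hensels_lemma (F := F) (a := a) (by simpa [h'] using h)
  refine ⟨z, by simpa using hz, ?_⟩
  rw [← sub_eq_zero, ← map_sub, toZMod_eq_zero_iff]
  simpa [h'] using hza

theorem exists_isRoot_pottsCubic_norm_eq_one (hp : p ≠ 3) {θ c : ℤ_[p]}
    (hθ : toZMod θ = 1) (hc : toZMod c = 0) :
    ∃ z, (pottsCubic θ c).IsRoot z ∧ ‖z‖ = 1 := by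
  have h3 := ZMod.ofNat_three_ne_zero hp
  obtain ⟨z, hz, hz3⟩ := exists_isRoot_toZMod_eq (F := pottsCubic θ c) (a := 3)
    (by simp [hθ, hc, map_ofNat]; norm_num)
    (by
      rw [map_pottsCubic, hθ, hc, eval_derivative_pottsCubic, map_ofNat]
      convert mul_ne_zero h3 h3 using 1
      ring)
  exact ⟨z, hz, norm_eq_one_iff_toZMod_ne_zero.2 (by rw [hz3, map_ofNat]; exact h3)⟩

end PadicInt

namespace Padic

variable {p : ℕ} [Fact p.Prime]

theorem norm_le_one_of_norm_sub_one_lt_one {x : ℚ_[p]} (hx : ‖x - 1‖ < 1) : ‖x‖ ≤ 1 := by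
  simpa [hx.le] using norm_add_le_max (x - 1) 1

theorem norm_eq_one_of_forall_isRoot_pottsCubic_eq (hp : p ≠ 3) {θ c y : ℚ_[p]}
    (hθ : ‖θ - 1‖ < 1) (hc : ‖c‖ < 1) (hy : ∀ z, (pottsCubic θ c).IsRoot z → z = y) :
    ‖y‖ = 1 := by
  set θ' : ℤ_[p] := ⟨θ, norm_le_one_of_norm_sub_one_lt_one hθ⟩
  set c' : ℤ_[p] := ⟨c, hc.le⟩
  obtain ⟨z, hz, hz1⟩ := PadicInt.exists_isRoot_pottsCubic_norm_eq_one hp (θ := θ') (c := c')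
    (by rwa [← sub_eq_zero, ← map_one PadicInt.toZMod, ← map_sub, PadicInt.toZMod_eq_zero_iff])
    (PadicInt.toZMod_eq_zero_iff.2 hc)
  rw [← hy z (map_pottsCubic PadicInt.Coe.ringHom θ' c' ▸ hz.map),
    PadicInt.padic_norm_e_of_padicInt, hz1]

end Padic

theorem potts_bethe_repelling_fixed_point_location_general (p : ℕ) [Fact (Nat.Prime p)]
    (hp5 : 5 ≤ p) (θ : ℚ_[p]) (q : ℕ)
    (hθq : ‖θ - 1‖ < ‖(q : ℚ_[p])‖) (hq : ‖(q : ℚ_[p])‖ < 1)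
    (y1 : ℚ_[p])
    (hy1u : ∀ z : ℚ_[p],
      z ^ 3 - (1 + θ + θ ^ 2) * z ^ 2 - (2 * θ + 1) * (1 - θ - (q : ℚ_[p])) * z
        - (1 - θ - (q : ℚ_[p])) ^ 2 = 0 → z = y1) :
    ‖(1 - (q : ℚ_[p]) + (θ - 1) * (y1 - 1)) - 1‖ = ‖(q : ℚ_[p])‖ ∧
    ‖(1 - (q : ℚ_[p]) + (θ - 1) * (y1 - 1)) - (2 - θ - (q : ℚ_[p]))‖ = ‖θ - 1‖ := by
  have hc : ‖1 - θ - (q : ℚ_[p])‖ = ‖(q : ℚ_[p])‖ := by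
    rw [show 1 - θ - (q : ℚ_[p]) = -q + -(θ - 1) by ring,
      norm_add_eq_left_of_norm_lt (by rwa [norm_neg, norm_neg]), norm_neg]
  have hy1 : ‖y1‖ = 1 :=
    Padic.norm_eq_one_of_forall_isRoot_pottsCubic_eq (by omega) (hθq.trans hq) (hc ▸ hq)
      fun z hz => hy1u z (by simpa using hz)
  have hsmall : ‖(θ - 1) * (y1 - 1)‖ < ‖(q : ℚ_[p])‖ := by
    rw [norm_mul]
    calc ‖θ - 1‖ * ‖y1 - 1‖ ≤ ‖θ - 1‖ * 1 := by
          gcongr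
          rw [sub_eq_add_neg]
          simpa [hy1] using norm_add_le_max y1 (-1)
      _ < ‖(q : ℚ_[p])‖ := by rwa [mul_one]
  constructor
  · rw [show 1 - (q : ℚ_[p]) + (θ - 1) * (y1 - 1) - 1 = -q + (θ - 1) * (y1 - 1) by ring,
      norm_add_eq_left_of_norm_lt (by rwa [norm_neg]), norm_neg]
  · rw [show 1 - (q : ℚ_[p]) + (θ - 1) * (y1 - 1) - (2 - θ - q) = (θ - 1) * y1 by ring,
      norm_mul, hy1, mul_one]

/-- for the repelling fixed point `x⁽¹⁾ = 1 - q + (θ-1)(y⁽¹⁾-1)` and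
the singular point `x⁽∞⁾ = 2-θ-q`, one has `‖x⁽¹⁾-1‖ = ‖q‖` and
`‖x⁽¹⁾-x⁽∞⁾‖ = ‖θ-1‖`. -/
theorem potts_bethe_repelling_fixed_point_location (p : ℕ) [Fact (Nat.Prime p)]
    (hp5 : 5 ≤ p) (hp3 : p % 3 = 2) (θ : ℚ_[p]) (q : ℕ)
    (hθq : ‖θ - 1‖ < ‖(q : ℚ_[p])‖) (hq : ‖(q : ℚ_[p])‖ < 1)
    (hne : (θ - 1) * (1 - θ - (q : ℚ_[p])) ≠ 0)
    (y1 : ℚ_[p])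
    (hy1 : y1 ^ 3 - (1 + θ + θ ^ 2) * y1 ^ 2 - (2 * θ + 1) * (1 - θ - (q : ℚ_[p])) * y1
        - (1 - θ - (q : ℚ_[p])) ^ 2 = 0)
    (hy1u : ∀ z : ℚ_[p],
      z ^ 3 - (1 + θ + θ ^ 2) * z ^ 2 - (2 * θ + 1) * (1 - θ - (q : ℚ_[p])) * z
        - (1 - θ - (q : ℚ_[p])) ^ 2 = 0 → z = y1) :
    ‖(1 - (q : ℚ_[p]) + (θ - 1) * (y1 - 1)) - 1‖ = ‖(q : ℚ_[p])‖ ∧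
    ‖(1 - (q : ℚ_[p]) + (θ - 1) * (y1 - 1)) - (2 - θ - (q : ℚ_[p]))‖ = ‖θ - 1‖ :=
  potts_bethe_repelling_fixed_point_location_general p hp5 θ q hθq hq y1 hy1u
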